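/- Let S₁ = [[−1,0,1],[0,1,0],[0,0,1]], S₂ = [[1,0,0],[0,−1,1],[0,0,1]], S₃ = [[1,0,0],[0,1,0],[2,3,−1]] be integer 3×3 matrices acting on column vectors, and let Q(x₁,x₂,x₃) = 2x₁² + 3x₂² + x₃² − 2x₁x₃ − 3x₂x₃. Then: (i) each Sᵢ preserves Q, i.e. Q(Sᵢ x) = Q(x) for all x ∈ ℤ³; (ii) orderOf S₁ = orderOf S₂ = orderOf S₃ = 2, orderOf (S₂S₃) = 6, orderOf (S₃S₁) = 4 and orderOf (S₁S₂) = 2 (so the Coxeter relations of the triangle group Δ(6,4,2) hold); and (iii) the subgroup of GL₃(ℤ) generated by S₁, S₂, S₃ is infinite. -/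

import Mathlib

/-- The reflection `s₁` of the `(6,4,2)`-triangle group in the root basis. -/
def refl1 : Matrix (Fin 3) (Fin 3) ℤ := !![-1, 0, 1; 0, 1, 0; 0, 0, 1]

/-- The reflection `s₂` of the `(6,4,2)`-triangle group in the root basis. -/
def refl2 : Matrix (Fin 3) (Fin 3) ℤ := !![1, 0, 0; 0, -1, 1; 0, 0, 1]

/-- The reflection `s₃` of the `(6,4,2)`-triangle group in the root basis. -/
def refl3 : Matrix (Fin 3) (Fin 3) ℤ := !![1, 0, 0; 0, 1, 0; 2, 3, -1]

/-- The Tits quadratic form of the `(6,4,2)`-triangle group, over `ℤ`. -/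
def titsFormZ (x : Fin 3 → ℤ) : ℤ :=
  2 * x 0 ^ 2 + 3 * x 1 ^ 2 + x 2 ^ 2 - 2 * x 0 * x 2 - 3 * x 1 * x 2

/-!
Each `Sᵢ` is the orthogonal reflection of `Q` in the simple root `αᵢ`, so it preserves `Q`, and
the Coxeter relations are finite matrix computations. The group is infinite because the Coxeter
element `S₁S₂S₃` has infinite order: on vectors `(a, a, b)` with `a ≤ b < 2a` it acts by
`(a, a, b) ↦ (4a - b, 4a - b, 5a - b)`, which preserves this cone and strictly increases `a`.
-/

open Matrix

theorem Subgroup.infinite_of_mem_of_not_isOfFinOrder {G : Type*} [Group G] {H : Subgroup G}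
    {g : G} (hg : g ∈ H) (hfin : ¬IsOfFinOrder g) : Infinite H :=
  ((infinite_zpowers.mpr hfin).mono (Subgroup.zpowers_le.mpr hg)).to_subtype

lemma titsFormZ_refl_mulVec (x : Fin 3 → ℤ) :
    titsFormZ (refl1 *ᵥ x) = titsFormZ x ∧ titsFormZ (refl2 *ᵥ x) = titsFormZ x ∧
      titsFormZ (refl3 *ᵥ x) = titsFormZ x := by
  refine ⟨?_, ?_, ?_⟩ <;>
    simp only [titsFormZ, refl1, refl2, refl3, mulVec, dotProduct, Fin.sum_univ_three, of_apply,
      cons_val', cons_val_zero, cons_val_one, cons_val, cons_val_fin_one] <;>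
    ring

lemma orderOf_refl1 : orderOf refl1 = 2 := (orderOf_eq_iff two_pos).mpr ⟨by decide, by decide⟩

lemma orderOf_refl2 : orderOf refl2 = 2 := (orderOf_eq_iff two_pos).mpr ⟨by decide, by decide⟩

lemma orderOf_refl3 : orderOf refl3 = 2 := (orderOf_eq_iff two_pos).mpr ⟨by decide, by decide⟩

lemma orderOf_refl2_mul_refl3 : orderOf (refl2 * refl3) = 6 :=
  (orderOf_eq_iff (by norm_num)).mpr ⟨by decide, by decide⟩

lemma orderOf_refl3_mul_refl1 : orderOf (refl3 * refl1) = 4 :=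
  (orderOf_eq_iff (by norm_num)).mpr ⟨by decide, by decide⟩

lemma orderOf_refl1_mul_refl2 : orderOf (refl1 * refl2) = 2 :=
  (orderOf_eq_iff two_pos).mpr ⟨by decide, by decide⟩

lemma refl1_mul_refl2_mul_refl3 : refl1 * refl2 * refl3 = !![1, 3, -1; 2, 2, -1; 2, 3, -1] := by
  decide

lemma refl1_mul_refl2_mul_refl3_mulVec (a b : ℤ) :
    (refl1 * refl2 * refl3) *ᵥ ![a, a, b] = ![4 * a - b, 4 * a - b, 5 * a - b] := by
  rw [refl1_mul_refl2_mul_refl3]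
  ext i
  fin_cases i <;>
    simp only [mulVec, dotProduct, Fin.sum_univ_three, of_apply, cons_val', cons_val_zero,
      cons_val_one, cons_val, cons_val_fin_one, Fin.zero_eta, Fin.mk_one, Fin.reduceFinMk] <;>
    ring

lemma exists_pow_refl1_mul_refl2_mul_refl3_mulVec (n : ℕ) :
    ∃ a b : ℤ, (refl1 * refl2 * refl3) ^ n *ᵥ ![1, 1, 1] = ![a, a, b] ∧
      (n : ℤ) < a ∧ a ≤ b ∧ b < 2 * a := by
  induction n with
  | zero => exact ⟨1, 1, by simp, by norm_num, le_rfl, by norm_num⟩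
  | succ n ih =>
    obtain ⟨a, b, hw, hna, hab, hba⟩ := ih
    refine ⟨4 * a - b, 5 * a - b, ?_, by push_cast; omega, by omega, by omega⟩
    rw [pow_succ', ← mulVec_mulVec, hw, refl1_mul_refl2_mul_refl3_mulVec]

lemma not_isOfFinOrder_refl1_mul_refl2_mul_refl3 : ¬IsOfFinOrder (refl1 * refl2 * refl3) := by
  rw [isOfFinOrder_iff_pow_eq_one]
  rintro ⟨n, hn, hpow⟩
  obtain ⟨a, b, hw, hna, -, -⟩ := exists_pow_refl1_mul_refl2_mul_refl3_mulVec n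
  rw [hpow, one_mulVec] at hw
  have ha : a = 1 := by simpa using (congrFun hw 0).symm
  omega

/-- The matrices `S₁, S₂, S₃` preserve the Tits form `Q`, satisfy the Coxeter relations
of the triangle group `Δ(6,4,2)` (each `Sᵢ` has order `2`, and `S₂S₃`, `S₃S₁`, `S₁S₂`
have orders `6`, `4`, `2` respectively), and generate an infinite subgroup
of `GL₃(ℤ)`. -/
theorem triangle_group_642_reflections
    (T₁ T₂ T₃ : GL (Fin 3) ℤ)
    (h₁ : (T₁ : Matrix (Fin 3) (Fin 3) ℤ) = refl1)
    (h₂ : (T₂ : Matrix (Fin 3) (Fin 3) ℤ) = refl2)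
    (h₃ : (T₃ : Matrix (Fin 3) (Fin 3) ℤ) = refl3) :
    (∀ x : Fin 3 → ℤ, titsFormZ (refl1.mulVec x) = titsFormZ x ∧
      titsFormZ (refl2.mulVec x) = titsFormZ x ∧ titsFormZ (refl3.mulVec x) = titsFormZ x) ∧
    (orderOf T₁ = 2 ∧ orderOf T₂ = 2 ∧ orderOf T₃ = 2 ∧
      orderOf (T₂ * T₃) = 6 ∧ orderOf (T₃ * T₁) = 4 ∧ orderOf (T₁ * T₂) = 2) ∧
    Infinite (Subgroup.closure ({T₁, T₂, T₃} : Set (GL (Fin 3) ℤ))) := by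
  refine ⟨titsFormZ_refl_mulVec, ?_, ?_⟩
  · simp only [← orderOf_units, Units.val_mul, h₁, h₂, h₃]
    exact ⟨orderOf_refl1, orderOf_refl2, orderOf_refl3, orderOf_refl2_mul_refl3,
      orderOf_refl3_mul_refl1, orderOf_refl1_mul_refl2⟩
  · have hmem : T₁ * T₂ * T₃ ∈ Subgroup.closure ({T₁, T₂, T₃} : Set (GL (Fin 3) ℤ)) :=
      mul_mem (mul_mem (Subgroup.subset_closure (by simp)) (Subgroup.subset_closure (by simp)))
        (Subgroup.subset_closure (by simp))
    refine Subgroup.infinite_of_mem_of_not_isOfFinOrder hmem ?_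
    rw [← Units.isOfFinOrder_val, Units.val_mul, Units.val_mul, h₁, h₂, h₃]
    exact not_isOfFinOrder_refl1_mul_refl2_mul_refl3
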